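/- Let Ω ⊂ ℝⁿ be a bounded domain with a tree-covering {U_t}_{t∈Γ} obtained from a Whitney decomposition (U_t = (17/16)·int(Q_t)). Fix 0 < α < n, and let p(·), q(·) be exponent functions on Ω with 1 < p_- ≤ p_+ < ∞, 1 ≤ q_- ≤ q_+ < ∞, such that for some 0 < β ≤ α one has 1/p(x) − 1/q(x) = β/n ≤ α/n for a.e. x ∈ Ω. Suppose p(·) ∈ ∂LH_0^τ(Ω) for some τ ≥ 1, and let p'(·), q'(·) be the pointwise dual exponents. Then both sup_{t∈Γ} |U_t|^{−1+α/n} ‖χ_{U_t}‖_{L^{q(·)}(Ω)} ‖χ_{U_t}‖_{L^{p'(·)}(Ω)} < ∞ and sup_{t∈Γ} |U_t|^{−1−β/n} ‖χ_{U_t}‖_{L^{q'(·)}(Ω)} ‖χ_{U_t}‖_{L^{p(·)}(Ω)} < ∞. -/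

import Mathlib

open MeasureTheory Metric Set Filter Topology

noncomputable section

abbrev Eucl (n : ℕ) : Type := EuclideanSpace ℝ (Fin n)

/-- Essential supremum of `p` over the set `A` (w.r.t. Lebesgue measure). -/
def essSupOn {n : ℕ} (p : Eucl n → ℝ) (A : Set (Eucl n)) : ℝ :=
  essSup p (volume.restrict A)

/-- Essential infimum of `p` over the set `A` (w.r.t. Lebesgue measure). -/
def essInfOn {n : ℕ} (p : Eucl n → ℝ) (A : Set (Eucl n)) : ℝ :=
  essInf p (volume.restrict A)

/-- The Luxemburg norm of `f` on `A` with variable exponent `p`. -/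
def luxNorm {n : ℕ} (A : Set (Eucl n)) (p f : Eucl n → ℝ) : ℝ :=
  sInf {l : ℝ | 0 < l ∧ (∫⁻ x in A, ENNReal.ofReal ((|f x| / l) ^ (p x))) ≤ 1}

/-- `f` belongs to the variable Lebesgue space `L^{p(·)}(A)`. -/
def MemVarLp {n : ℕ} (A : Set (Eucl n)) (p f : Eucl n → ℝ) : Prop :=
  ∃ l : ℝ, 0 < l ∧ (∫⁻ x in A, ENNReal.ofReal ((|f x| / l) ^ (p x))) ≤ 1

/-- `d(x) = dist(x, ∂Ω)`. -/
def bdist {n : ℕ} (Ω : Set (Eucl n)) (x : Eucl n) : ℝ :=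
  infDist x (frontier Ω)

/-- The ball `B_{x,τ} = B(x, τ d(x))`. -/
def ballB {n : ℕ} (Ω : Set (Eucl n)) (τ : ℝ) (x : Eucl n) : Set (Eucl n) :=
  ball x (τ * bdist Ω x)

/-- The boundary log-Hölder condition `∂LH₀^τ(Ω)` with constant `C₀`. -/
def BoundaryLH {n : ℕ} (Ω : Set (Eucl n)) (p : Eucl n → ℝ) (τ C₀ : ℝ) : Prop :=
  ∀ x ∈ Ω, τ * bdist Ω x ≤ 1 / 2 →
    essSupOn p (ballB Ω τ x ∩ Ω) - essInfOn p (ballB Ω τ x ∩ Ω)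
      ≤ C₀ / (-Real.log (τ * bdist Ω x))

/-- `Ω` is a John domain with parameter `lam`. -/
def JohnDomain {n : ℕ} (Ω : Set (Eucl n)) (lam : ℝ) : Prop :=
  ∃ x₀ ∈ Ω, ∀ y ∈ Ω, ∃ ℓ : ℝ, 0 ≤ ℓ ∧ ∃ γ : ℝ → Eucl n,
    γ 0 = y ∧ γ ℓ = x₀ ∧ (∀ t ∈ Icc (0:ℝ) ℓ, γ t ∈ Ω) ∧
    LipschitzOnWith 1 γ (Icc (0:ℝ) ℓ) ∧
    ∀ t ∈ Icc (0:ℝ) ℓ, t ≤ lam * infDist (γ t) (frontier Ω)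

/-- `g` is uniformly `ε`-continuous on `S`. -/
def UnifEpsCont {n : ℕ} (S : Set (Eucl n)) (g : Eucl n → ℝ) (ε : ℝ) : Prop :=
  ∃ δ : ℝ, 0 < δ ∧ ∀ x ∈ S, ∀ y ∈ S, dist x y < δ → |g y - g x| < ε

/-- `f` is locally Lipschitz on `S`. -/
def LocLipschitzOn {n : ℕ} (S : Set (Eucl n)) (f : Eucl n → ℝ) : Prop :=
  ∀ x ∈ S, ∃ K : NNReal, ∃ t ∈ 𝓝 x, LipschitzOnWith K f (t ∩ S)

/-- The average of `f` over `A`. -/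
def avgOn {n : ℕ} (A : Set (Eucl n)) (f : Eucl n → ℝ) : ℝ :=
  (volume A).toReal⁻¹ * ∫ x in A, f x

/-- The pointwise dual (conjugate) exponent `p'`, `1/p + 1/p' = 1`. -/
def dualExp {α : Type*} (p : α → ℝ) : α → ℝ :=
  fun x => p x / (p x - 1)

/-- The norm of the a.e.-defined gradient of `f`. -/
def gradNorm {n : ℕ} (f : Eucl n → ℝ) : Eucl n → ℝ :=
  fun x => ‖fderiv ℝ f x‖

/-- The closed dyadic cube of generation `k` with lattice coordinates `z`. -/
def cubeQ {n : ℕ} (k : ℤ) (z : Fin n → ℤ) : Set (Eucl n) :=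
  {x | ∀ i, |x i - ((z i : ℝ) + 1 / 2) * (2:ℝ) ^ (-k)| ≤ (2:ℝ) ^ (-k) / 2}

/-- The expanded open cube `U = (17/16)·int(Q)`. -/
def cubeU {n : ℕ} (k : ℤ) (z : Fin n → ℤ) : Set (Eucl n) :=
  {x | ∀ i, |x i - ((z i : ℝ) + 1 / 2) * (2:ℝ) ^ (-k)| < (17 / 16) * ((2:ℝ) ^ (-k) / 2)}

/-- The dilation `K·Q` of the cube `Q` about its center. -/
def cubeDil {n : ℕ} (K : ℝ) (k : ℤ) (z : Fin n → ℤ) : Set (Eucl n) :=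
  {x | ∀ i, |x i - ((z i : ℝ) + 1 / 2) * (2:ℝ) ^ (-k)| ≤ K * ((2:ℝ) ^ (-k) / 2)}

/-- Distance between two sets. -/
def setDist {n : ℕ} (A B : Set (Eucl n)) : ℝ :=
  sInf (Set.image2 dist A B)

/-- A tree-covering of a bounded domain `Ω` obtained from a Whitney decomposition,
with `U_t = (17/16)·int(Q_t)` (Remark 3.2). -/
structure WhitneyTreeCovering (n : ℕ) (Ω : Set (Eucl n)) where
  ι : Type
  countable : Countable ι
  kk : ι → ℤ
  zz : ι → Fin n → ℤ
  disjQ : ∀ s t : ι, s ≠ t →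
    Disjoint (interior (cubeQ (kk s) (zz s))) (interior (cubeQ (kk t) (zz t)))
  unionQ : (⋃ t : ι, cubeQ (kk t) (zz t)) = Ω
  whitney₁ : ∀ t, Metric.diam (cubeQ (kk t) (zz t))
    ≤ setDist (cubeQ (kk t) (zz t)) (frontier Ω)
  whitney₂ : ∀ t, setDist (cubeQ (kk t) (zz t)) (frontier Ω)
    ≤ 4 * Metric.diam (cubeQ (kk t) (zz t))
  neighbor : ∀ s t : ι, (cubeQ (kk s) (zz s) ∩ cubeQ (kk t) (zz t)).Nonempty →
    Metric.diam (cubeQ (kk t) (zz t)) ≤ 4 * Metric.diam (cubeQ (kk s) (zz s))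
  root : ι
  parent : ι → ι
  parent_root : parent root = root
  reach : ∀ t : ι, ∃ m : ℕ, parent^[m] t = root
  C₁ : ℝ
  one_le_C₁ : 1 ≤ C₁
  cover : ∀ᵐ x ∂(volume : Measure (Eucl n)),
    (x ∈ Ω → 1 ≤ ∑' t : ι, Set.indicator (cubeU (kk t) (zz t)) (fun _ => (1:ℝ)) x) ∧
    (∑' t : ι, Set.indicator (cubeU (kk t) (zz t)) (fun _ => (1:ℝ)) x
      ≤ C₁ * Set.indicator Ω (fun _ => (1:ℝ)) x)
  Bt : ι → Set (Eucl n)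
  Bt_open : ∀ t, IsOpen (Bt t)
  Bt_sub : ∀ t, t ≠ root → Bt t ⊆ cubeU (kk t) (zz t) ∩ cubeU (kk (parent t)) (zz (parent t))
  Bt_disj : ∀ s t, s ≠ root → t ≠ root → s ≠ t → Disjoint (Bt s) (Bt t)
  C₂ : ℝ
  meas_ratio : ∀ t, t ≠ root →
    (volume (cubeU (kk t) (zz t))).toReal ≤ C₂ * (volume (Bt t)).toReal

/-- The Whitney cube `Q_t`. -/
def WhitneyTreeCovering.Q {n : ℕ} {Ω : Set (Eucl n)} (T : WhitneyTreeCovering n Ω)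
    (t : T.ι) : Set (Eucl n) := cubeQ (T.kk t) (T.zz t)

/-- The expanded cube `U_t`. -/
def WhitneyTreeCovering.U {n : ℕ} {Ω : Set (Eucl n)} (T : WhitneyTreeCovering n Ω)
    (t : T.ι) : Set (Eucl n) := cubeU (T.kk t) (T.zz t)

/-- The shadow `W_t = ⋃_{s ⪰ t} U_s`. -/
def WhitneyTreeCovering.shadow {n : ℕ} {Ω : Set (Eucl n)} (T : WhitneyTreeCovering n Ω)
    (t : T.ι) : Set (Eucl n) :=
  ⋃ s ∈ {s : T.ι | ∃ m : ℕ, T.parent^[m] s = t}, T.U s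

/-- The characteristic function of a set, as a real valued function. -/
def charFun {n : ℕ} (A : Set (Eucl n)) : Eucl n → ℝ :=
  Set.indicator A (fun _ => (1:ℝ))

section OffdiagHelpers

private lemma luxNorm_nonneg' {n : ℕ} (Ω : Set (Eucl n)) (r f : Eucl n → ℝ) :
    0 ≤ luxNorm Ω r f :=
  Real.sInf_nonneg fun _ hy => hy.1.le

private lemma luxNorm_le' {n : ℕ} {Ω : Set (Eucl n)} {r f : Eucl n → ℝ} {l : ℝ}
    (hl : 0 < l) (h : (∫⁻ x in Ω, ENNReal.ofReal ((|f x| / l) ^ (r x))) ≤ 1) :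
    luxNorm Ω r f ≤ l :=
  csInf_le ⟨0, fun _ hy => hy.1.le⟩ ⟨hl, h⟩

private lemma lux_char_le {n : ℕ} {Ω U : Set (Eucl n)} (hU : MeasurableSet U)
    (hUfin : volume U ≠ ⊤) (hU0 : volume U ≠ 0)
    {r : Eucl n → ℝ} (hr0 : ∀ᵐ x ∂(volume.restrict Ω), 0 < r x)
    {l : ℝ} (hl : 0 < l)
    (hb : ∀ᵐ x ∂(volume.restrict Ω), x ∈ U → (1 / l) ^ (r x) ≤ 1 / (volume U).toReal) :
    luxNorm Ω r (charFun U) ≤ l := by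
  set v := (volume U).toReal with hv
  have hv0 : 0 < v := ENNReal.toReal_pos hU0 hUfin
  apply luxNorm_le' hl
  have step : ∀ᵐ x ∂(volume.restrict Ω),
      ENNReal.ofReal ((|charFun U x| / l) ^ (r x))
        ≤ U.indicator (fun _ => ENNReal.ofReal (1/v)) x := by
    filter_upwards [hr0, hb] with x hx1 hx2
    by_cases hxU : x ∈ U
    · simp only [_root_.charFun, Set.indicator_of_mem hxU, abs_one]
      exact ENNReal.ofReal_le_ofReal (hx2 hxU)
    · simp only [_root_.charFun, Set.indicator_of_notMem hxU, abs_zero, zero_div,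
        Real.zero_rpow (ne_of_gt hx1), ENNReal.ofReal_zero]
      exact le_refl _
  calc (∫⁻ x in Ω, ENNReal.ofReal ((|charFun U x| / l) ^ (r x)))
      ≤ ∫⁻ x in Ω, U.indicator (fun _ => ENNReal.ofReal (1/v)) x := lintegral_mono_ae step
    _ ≤ ∫⁻ x, U.indicator (fun _ => ENNReal.ofReal (1/v)) x := setLIntegral_le_lintegral _ _
    _ = ENNReal.ofReal (1/v) * volume U := by
        rw [lintegral_indicator hU, setLIntegral_const]
    _ = ENNReal.ofReal (1/v) * ENNReal.ofReal v := by rw [ENNReal.ofReal_toReal hUfin]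
    _ = 1 := by
        rw [← ENNReal.ofReal_mul (by positivity), one_div, inv_mul_cancel₀ (ne_of_gt hv0),
          ENNReal.ofReal_one]

private lemma lux_char_le_rpow {n : ℕ} {Ω U : Set (Eucl n)} (hU : MeasurableSet U)
    (hUfin : volume U ≠ ⊤) (hU0 : volume U ≠ 0)
    {r : Eucl n → ℝ} {s : ℝ} (hs : 0 ≤ s) (hv1 : (volume U).toReal ≤ 1)
    (hr : ∀ᵐ x ∂(volume.restrict Ω), 0 < r x ∧ (x ∈ U → 1 ≤ r x ∧ s * r x ≤ 1)) :
    luxNorm Ω r (charFun U) ≤ (volume U).toReal ^ s := by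
  set v := (volume U).toReal with hv
  have hv0 : 0 < v := ENNReal.toReal_pos hU0 hUfin
  apply lux_char_le hU hUfin hU0 (by filter_upwards [hr] with x hx using hx.1)
    (Real.rpow_pos_of_pos hv0 s)
  filter_upwards [hr] with x hx hxU
  have hrx := hx.1
  have hsr := (hx.2 hxU).2
  have h1 : (1:ℝ) / v ^ s = v ^ (-s) := by
    rw [Real.rpow_neg hv0.le, one_div]
  have goal : (1 / v ^ s) ^ r x ≤ 1 / v := by
    have h2 : (1:ℝ)/v = v ^ (-1:ℝ) := by rw [Real.rpow_neg_one, one_div]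
    rw [h1, ← Real.rpow_mul hv0.le, h2]
    exact Real.rpow_le_rpow_of_exponent_ge hv0 hv1 (by nlinarith)
  exact goal

private lemma lux_char_le_self {n : ℕ} {Ω U : Set (Eucl n)} (hU : MeasurableSet U)
    (hUfin : volume U ≠ ⊤) (hU0 : volume U ≠ 0)
    {r : Eucl n → ℝ} (hv1 : 1 ≤ (volume U).toReal)
    (hr : ∀ᵐ x ∂(volume.restrict Ω), 0 < r x ∧ (x ∈ U → 1 ≤ r x)) :
    luxNorm Ω r (charFun U) ≤ (volume U).toReal := by
  set v := (volume U).toReal with hv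
  have hv0 : 0 < v := ENNReal.toReal_pos hU0 hUfin
  apply lux_char_le hU hUfin hU0 (by filter_upwards [hr] with x hx using hx.1) hv0
  filter_upwards [hr] with x hx hxU
  show (1/v) ^ r x ≤ 1 / v
  have h0 : (0:ℝ) < 1/v := by positivity
  have h1 : (1:ℝ)/v ≤ 1 := by rw [div_le_one hv0]; exact hv1
  calc (1/v) ^ r x ≤ (1/v) ^ (1:ℝ) :=
        Real.rpow_le_rpow_of_exponent_ge h0 h1 (hx.2 hxU)
    _ = 1/v := Real.rpow_one _

private lemma essSup_le'' {α : Type*} [MeasurableSpace α] {μ : Measure α} [(ae μ).NeBot]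
    {f : α → ℝ} {c c' : ℝ} (hlb : ∀ᵐ x ∂μ, c' ≤ f x) (hub : ∀ᵐ x ∂μ, f x ≤ c) :
    essSup f μ ≤ c :=
  limsup_le_of_le (isCoboundedUnder_le_of_eventually_le _ hlb) hub

private lemma le_essInf'' {α : Type*} [MeasurableSpace α] {μ : Measure α} [(ae μ).NeBot]
    {f : α → ℝ} {c c' : ℝ} (hub : ∀ᵐ x ∂μ, f x ≤ c') (h : ∀ᵐ x ∂μ, c ≤ f x) :
    c ≤ essInf f μ :=
  le_liminf_of_le (isCoboundedUnder_ge_of_eventually_le _ hub) h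

private lemma ae_imp_of_ae_restrict {n : ℕ} {U Ω : Set (Eucl n)} (hU : MeasurableSet U)
    (hsub : U ⊆ Ω) {φ : Eucl n → Prop} (h : ∀ᵐ x ∂(volume.restrict U), φ x) :
    ∀ᵐ x ∂(volume.restrict Ω), x ∈ U → φ x := by
  refine (ae_restrict_iff' hU).mp ?_
  rwa [Measure.restrict_restrict hU, Set.inter_eq_self_of_subset_left hsub]

private lemma key_bound {n : ℕ} {Ω U : Set (Eucl n)} (hU : MeasurableSet U)
    (hUΩ : U ⊆ Ω) (hΩfin : volume Ω ≠ ⊤) (hU0 : volume U ≠ 0)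
    {a b e s s' c₀ K : ℝ} {r r' : Eucl n → ℝ}
    (ha1 : a ≤ 1) (hb0 : 0 ≤ b) (he : e ≤ 0) (hs : 0 ≤ s) (hs' : 0 ≤ s')
    (hsum : b - a ≤ e + s + s') (hc₀ : 0 < c₀)
    (hr : ∀ᵐ x ∂(volume.restrict Ω), 0 < r x ∧ (x ∈ U → 1 ≤ r x ∧ s * r x ≤ 1))
    (hr' : ∀ᵐ x ∂(volume.restrict Ω), 0 < r' x ∧ (x ∈ U → 1 ≤ r' x ∧ s' * r' x ≤ 1))
    (hdisj : (volume U).toReal < 1 → c₀ ≤ (volume U).toReal ∨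
      (a - b) * (-Real.log (volume U).toReal) ≤ K) :
    (volume U).toReal ^ e * luxNorm Ω r (charFun U) * luxNorm Ω r' (charFun U)
      ≤ max (max 1 (volume Ω).toReal * max 1 (volume Ω).toReal)
          (max (Real.exp K) c₀⁻¹) := by
  set v := (volume U).toReal with hv
  have hUfin : volume U ≠ ⊤ := ne_top_of_le_ne_top hΩfin (measure_mono hUΩ)
  have hv0 : 0 < v := ENNReal.toReal_pos hU0 hUfin
  have hvV : v ≤ (volume Ω).toReal := ENNReal.toReal_mono hΩfin (measure_mono hUΩ)
  have hL0 := luxNorm_nonneg' Ω r (charFun U)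
  have hL'0 := luxNorm_nonneg' Ω r' (charFun U)
  have hve0 : 0 < v ^ e := Real.rpow_pos_of_pos hv0 e
  rcases lt_or_ge v 1 with hv1 | hv1
  · have h1 : luxNorm Ω r (charFun U) ≤ v ^ s :=
      lux_char_le_rpow hU hUfin hU0 hs hv1.le hr
    have h2 : luxNorm Ω r' (charFun U) ≤ v ^ s' :=
      lux_char_le_rpow hU hUfin hU0 hs' hv1.le hr'
    have step : v ^ e * luxNorm Ω r (charFun U) * luxNorm Ω r' (charFun U)
        ≤ v ^ (e + s + s') := by
      rw [Real.rpow_add hv0, Real.rpow_add hv0]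
      have := mul_le_mul (mul_le_mul_of_nonneg_left h1 hve0.le) h2 hL'0 (by positivity)
      linarith
    have step2 : v ^ (e + s + s') ≤ v ^ (b - a) :=
      Real.rpow_le_rpow_of_exponent_ge hv0 hv1.le hsum
    rcases hdisj hv1 with hc | hK
    · have s3 : v ^ (b - a) ≤ v ^ (-1 : ℝ) :=
        Real.rpow_le_rpow_of_exponent_ge hv0 hv1.le (by linarith)
      have s4 : v ^ (-1 : ℝ) = v⁻¹ := Real.rpow_neg_one v
      have s5 : v⁻¹ ≤ c₀⁻¹ := by
        apply inv_anti₀ hc₀ hc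
      calc v ^ e * luxNorm Ω r (charFun U) * luxNorm Ω r' (charFun U)
          ≤ c₀⁻¹ := by rw [s4] at s3; linarith
        _ ≤ _ := le_max_of_le_right (le_max_right _ _)
    · have s3 : v ^ (b - a) ≤ Real.exp K := by
        rw [Real.rpow_def_of_pos hv0]
        apply Real.exp_le_exp.mpr
        nlinarith [hK]
      calc v ^ e * luxNorm Ω r (charFun U) * luxNorm Ω r' (charFun U)
          ≤ Real.exp K := by linarith
        _ ≤ _ := le_max_of_le_right (le_max_left _ _)
  · have h1 : luxNorm Ω r (charFun U) ≤ v :=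
      lux_char_le_self hU hUfin hU0 hv1
        (by filter_upwards [hr] with x hx using ⟨hx.1, fun hu => (hx.2 hu).1⟩)
    have h2 : luxNorm Ω r' (charFun U) ≤ v :=
      lux_char_le_self hU hUfin hU0 hv1
        (by filter_upwards [hr'] with x hx using ⟨hx.1, fun hu => (hx.2 hu).1⟩)
    have h3 : v ^ e ≤ 1 := Real.rpow_le_one_of_one_le_of_nonpos hv1 he
    have hV1 : v ≤ max 1 (volume Ω).toReal := le_max_of_le_right hvV
    calc v ^ e * luxNorm Ω r (charFun U) * luxNorm Ω r' (charFun U)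
        ≤ 1 * v * v := by
          apply mul_le_mul (mul_le_mul h3 h1 hL0 zero_le_one) h2 hL'0 (by positivity)
      _ = v * v := by ring
      _ ≤ max 1 (volume Ω).toReal * max 1 (volume Ω).toReal :=
          mul_le_mul hV1 hV1 hv0.le (by positivity)
      _ ≤ _ := le_max_left _ _

private lemma eucl_dist_le {n : ℕ} {x y : Eucl n} {m : ℝ} (hm : 0 ≤ m)
    (hc : ∀ i, |x i - y i| ≤ m) : dist x y ≤ Real.sqrt n * m := by
  rw [EuclideanSpace.dist_eq]
  have hsum : (∑ i, dist (x i) (y i) ^ 2) ≤ (n : ℝ) * m ^ 2 := by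
    calc (∑ i, dist (x i) (y i) ^ 2) ≤ ∑ _i : Fin n, m ^ 2 := by
          apply Finset.sum_le_sum
          intro i _
          rw [Real.dist_eq]
          exact pow_le_pow_left₀ (abs_nonneg _) (hc i) 2
      _ = (n : ℝ) * m ^ 2 := by
          rw [Finset.sum_const, Finset.card_univ, Fintype.card_fin, nsmul_eq_mul]
  calc Real.sqrt (∑ i, dist (x i) (y i) ^ 2) ≤ Real.sqrt ((n:ℝ) * m ^ 2) :=
        Real.sqrt_le_sqrt hsum
    _ = Real.sqrt n * m := by
        rw [Real.sqrt_mul (Nat.cast_nonneg n), Real.sqrt_sq hm]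

private lemma eucl_dist_eq_const {n : ℕ} {x y : Eucl n} {m : ℝ} (hm : 0 ≤ m)
    (hc : ∀ i, x i - y i = m) : dist x y = Real.sqrt n * m := by
  rw [EuclideanSpace.dist_eq]
  have hco : ∀ i : Fin n, dist (x i) (y i) ^ 2 = m ^ 2 := fun i => by
    rw [Real.dist_eq, hc i, abs_of_nonneg hm]
  rw [Finset.sum_congr rfl fun i _ => hco i, Finset.sum_const, Finset.card_univ,
    Fintype.card_fin, nsmul_eq_mul, show (n:ℝ) * m ^ 2 = (Real.sqrt n * m)^2 by
      rw [mul_pow, Real.sq_sqrt (Nat.cast_nonneg n)],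
    Real.sqrt_sq (by positivity)]

private def eCtr {n : ℕ} (k : ℤ) (z : Fin n → ℤ) : Eucl n :=
  (WithLp.equiv 2 (Fin n → ℝ)).symm (fun i => ((z i : ℝ) + 1/2) * (2:ℝ)^(-k))

set_option maxHeartbeats 1000000 in
private lemma cube_facts {n : ℕ} (hn : 0 < n) {Ω : Set (Eucl n)} (hΩo : IsOpen Ω)
    {τ : ℝ} (hτ : 1 ≤ τ) (k : ℤ) (z : Fin n → ℤ)
    (hQΩ : cubeQ k z ⊆ Ω)
    (hw1 : Metric.diam (cubeQ k z) ≤ setDist (cubeQ k z) (frontier Ω))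
    (hw2 : setDist (cubeQ k z) (frontier Ω) ≤ 4 * Metric.diam (cubeQ k z)) :
    MeasurableSet (cubeU k z) ∧
    volume (cubeU k z) = ENNReal.ofReal (17/16 * (2:ℝ)^(-k)) ^ n ∧
    eCtr k z ∈ Ω ∧
    cubeU k z ⊆ Ω ∧
    cubeU k z ⊆ ball (eCtr k z) (τ * bdist Ω (eCtr k z)) ∧
    Real.sqrt n * (2:ℝ)^(-k) ≤ bdist Ω (eCtr k z) ∧
    bdist Ω (eCtr k z) ≤ 5 * (Real.sqrt n * (2:ℝ)^(-k)) := by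
  have hh0 : (0:ℝ) < (2:ℝ)^(-k) := zpow_pos two_pos _
  set h : ℝ := (2:ℝ)^(-k) with hh
  set sn := Real.sqrt n with hsn
  have hsn1 : 1 ≤ sn := by
    have h1 : (1:ℝ) ≤ (n:ℝ) := by exact_mod_cast hn
    calc (1:ℝ) = Real.sqrt 1 := Real.sqrt_one.symm
      _ ≤ sn := Real.sqrt_le_sqrt h1
  have hsn0 : 0 < sn := lt_of_lt_of_le one_pos hsn1
  have hctr_co : ∀ i, eCtr k z i = ((z i : ℝ) + 1/2) * h := fun _ => rfl
  have hmemQ : ∀ x : Eucl n, x ∈ cubeQ k z ↔ ∀ i, |x i - ((z i : ℝ) + 1/2) * h| ≤ h/2 :=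
    fun x => Iff.rfl
  have hmemU : ∀ x : Eucl n, x ∈ cubeU k z ↔ ∀ i, |x i - ((z i : ℝ) + 1/2) * h| < 17/16*(h/2) :=
    fun x => Iff.rfl
  have hctrQ : eCtr k z ∈ cubeQ k z := by
    rw [hmemQ]
    intro i
    rw [hctr_co i, sub_self, abs_zero]
    positivity
  have hctrΩ : eCtr k z ∈ Ω := hQΩ hctrQ
  set A : Eucl n := (WithLp.equiv 2 (Fin n → ℝ)).symm (fun i => (z i : ℝ) * h) with hA
  set B : Eucl n := (WithLp.equiv 2 (Fin n → ℝ)).symm (fun i => ((z i : ℝ) + 1) * h) with hB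
  have hAQ : A ∈ cubeQ k z := by
    rw [hmemQ]
    intro i
    show |(z i : ℝ) * h - ((z i : ℝ) + 1/2) * h| ≤ h / 2
    rw [show (z i : ℝ) * h - ((z i : ℝ) + 1/2) * h = -(h/2) by ring, abs_neg,
      abs_of_pos (by positivity)]
  have hBQ : B ∈ cubeQ k z := by
    rw [hmemQ]
    intro i
    show |((z i : ℝ) + 1) * h - ((z i : ℝ) + 1/2) * h| ≤ h / 2
    rw [show ((z i : ℝ) + 1) * h - ((z i : ℝ) + 1/2) * h = h/2 by ring,
      abs_of_pos (by positivity)]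
  have hQbdd : Bornology.IsBounded (cubeQ k z) := by
    apply (Metric.isBounded_closedBall (x := eCtr k z) (r := sn * h)).subset
    intro x hx
    have hd := eucl_dist_le (x := x) (y := eCtr k z) (m := h/2) (by positivity)
      (fun i => by rw [hctr_co i]; exact (hmemQ x).mp hx i)
    rw [Metric.mem_closedBall]
    calc dist x (eCtr k z) ≤ sn * (h/2) := hd
      _ ≤ sn * h := by nlinarith
  have hdAB : dist B A = sn * h := by
    apply eucl_dist_eq_const hh0.le
    intro i
    show ((z i : ℝ) + 1) * h - (z i : ℝ) * h = h
    ring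
  have hdiam_lo : sn * h ≤ Metric.diam (cubeQ k z) := by
    rw [← hdAB]
    exact Metric.dist_le_diam_of_mem hQbdd hBQ hAQ
  have hdiam_hi : Metric.diam (cubeQ k z) ≤ sn * h := by
    apply Metric.diam_le_of_forall_dist_le (by positivity)
    intro x hx y hy
    apply eucl_dist_le hh0.le
    intro i
    calc |x i - y i| ≤ |x i - eCtr k z i| + |eCtr k z i - y i| := abs_sub_le _ _ _
      _ ≤ h/2 + h/2 := by
          apply add_le_add
          · rw [hctr_co i]; exact (hmemQ x).mp hx i
          · rw [abs_sub_comm, hctr_co i]; exact (hmemQ y).mp hy i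
      _ = h := by ring
  have hFne : (frontier Ω).Nonempty := by
    rcases Set.eq_empty_or_nonempty (frontier Ω) with hF | hF
    · exfalso
      have hz : setDist (cubeQ k z) (frontier Ω) = 0 := by
        rw [setDist, hF, Set.image2_empty_right, Real.sInf_empty]
      rw [hz] at hw1
      nlinarith
    · exact hF
  have hsd_le : ∀ q ∈ cubeQ k z, setDist (cubeQ k z) (frontier Ω) ≤ infDist q (frontier Ω) := by
    intro q hq
    obtain ⟨y, hyF, hy⟩ := isClosed_frontier.exists_infDist_eq_dist hFne q
    rw [hy]
    apply csInf_le
    · refine ⟨0, ?_⟩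
      rintro u ⟨x', _, y', _, rfl⟩
      exact dist_nonneg
    · exact Set.mem_image2_of_mem hq hyF
  have hd_lo : sn * h ≤ bdist Ω (eCtr k z) :=
    le_trans hdiam_lo (le_trans hw1 (hsd_le _ hctrQ))
  have hd_hi : bdist Ω (eCtr k z) ≤ 5 * (sn * h) := by
    apply le_of_forall_pos_lt_add
    intro ε hε
    obtain ⟨u, hu, hlt⟩ := Real.lt_sInf_add_pos
      ((Set.Nonempty.image2 ⟨_, hctrQ⟩ hFne) :
        (Set.image2 dist (cubeQ k z) (frontier Ω)).Nonempty) hε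
    rw [Set.mem_image2] at hu
    obtain ⟨qq, hqq, y, hyF, rfl⟩ := hu
    have h1 : dist qq y < setDist (cubeQ k z) (frontier Ω) + ε := hlt
    have h2 : dist (eCtr k z) qq ≤ Metric.diam (cubeQ k z) :=
      Metric.dist_le_diam_of_mem hQbdd hctrQ hqq
    calc bdist Ω (eCtr k z) ≤ dist (eCtr k z) y := Metric.infDist_le_dist_of_mem hyF
      _ ≤ dist (eCtr k z) qq + dist qq y := dist_triangle _ _ _
      _ < 5 * (sn * h) + ε := by nlinarith [hw2, hdiam_hi]
  have hUnear : ∀ x ∈ cubeU k z, ∃ q ∈ cubeQ k z, dist x q ≤ sn * (h/32) := by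
    intro x hx
    refine ⟨eCtr k z + (16/17 : ℝ) • (x - eCtr k z), ?_, ?_⟩
    · rw [hmemQ]
      intro i
      have hco : (eCtr k z + (16/17 : ℝ) • (x - eCtr k z)) i
          = eCtr k z i + (16/17) * (x i - eCtr k z i) := rfl
      have hxi : |x i - eCtr k z i| < 17/16 * (h/2) := by
        rw [hctr_co i]; exact (hmemU x).mp hx i
      rw [hctr_co i] at hxi
      rw [hco, hctr_co i]
      have habs : ∀ C t : ℝ, |t - C| < 17/16*(h/2) → |C + 16/17*(t - C) - C| ≤ h/2 := by
        intro C t ht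
        rw [show C + 16/17*(t-C) - C = 16/17*(t-C) by ring, abs_mul,
          abs_of_pos (by norm_num : (0:ℝ) < 16/17)]
        nlinarith
      exact habs _ _ hxi
    · apply eucl_dist_le (by positivity)
      intro i
      have hco : (eCtr k z + (16/17 : ℝ) • (x - eCtr k z)) i
          = eCtr k z i + (16/17) * (x i - eCtr k z i) := rfl
      have hxi : |x i - eCtr k z i| < 17/16 * (h/2) := by
        rw [hctr_co i]; exact (hmemU x).mp hx i
      have habs : ∀ C t : ℝ, |t - C| < 17/16*(h/2) → |t - (C + 16/17*(t - C))| ≤ h/32 := by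
        intro C t ht
        rw [show t - (C + 16/17*(t-C)) = (1/17)*(t-C) by ring, abs_mul,
          abs_of_pos (by norm_num : (0:ℝ) < 1/17)]
        nlinarith
      rw [hco]
      exact habs _ _ hxi
  have hUΩ : cubeU k z ⊆ Ω := by
    intro x hx
    obtain ⟨q, hqQ, hdq⟩ := hUnear x hx
    by_contra hxΩ
    have hseg : (segment ℝ q x ∩ frontier Ω).Nonempty := by
      by_contra hemp
      rw [Set.not_nonempty_iff_eq_empty] at hemp
      have hxcl : x ∉ closure Ω := by
        intro hxc
        have hxF : x ∈ frontier Ω := ⟨hxc, by rwa [hΩo.interior_eq]⟩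
        have hmem : x ∈ segment ℝ q x ∩ frontier Ω := ⟨right_mem_segment _ _ _, hxF⟩
        rw [hemp] at hmem; exact hmem
      have hsub : segment ℝ q x ⊆ Ω ∪ (closure Ω)ᶜ := by
        intro y hy
        by_cases hyΩ : y ∈ Ω
        · exact Or.inl hyΩ
        · refine Or.inr fun hyc => ?_
          have hyF : y ∈ frontier Ω := ⟨hyc, by rwa [hΩo.interior_eq]⟩
          have hmem : y ∈ segment ℝ q x ∩ frontier Ω := ⟨hy, hyF⟩
          rw [hemp] at hmem; exact hmem
      obtain ⟨y, hy⟩ := (convex_segment q x).isPreconnected Ω (closure Ω)ᶜ hΩo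
        isClosed_closure.isOpen_compl hsub ⟨q, left_mem_segment _ _ _, hQΩ hqQ⟩
        ⟨x, right_mem_segment _ _ _, hxcl⟩
      exact hy.2.2 (subset_closure hy.2.1)
    obtain ⟨y, hyseg, hyF⟩ := hseg
    have h1 : dist q y ≤ dist q x := by
      have h5 := dist_add_dist_of_mem_segment hyseg
      linarith [dist_nonneg (x := y) (y := x)]
    have h2 : infDist q (frontier Ω) ≤ dist q y := Metric.infDist_le_dist_of_mem hyF
    have h3 : sn * h ≤ infDist q (frontier Ω) :=
      le_trans hdiam_lo (le_trans hw1 (hsd_le _ hqQ))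
    have h4 : dist q x ≤ sn * (h/32) := by rw [dist_comm]; exact hdq
    nlinarith
  have hUball : cubeU k z ⊆ ball (eCtr k z) (τ * bdist Ω (eCtr k z)) := by
    intro x hx
    rw [mem_ball]
    have hle : dist x (eCtr k z) ≤ sn * (17/32 * h) := by
      apply eucl_dist_le (by positivity)
      intro i
      have h1 : |x i - eCtr k z i| < 17/16 * (h/2) := by
        rw [hctr_co i]; exact (hmemU x).mp hx i
      linarith
    have hd_pos : (0:ℝ) < bdist Ω (eCtr k z) := lt_of_lt_of_le (by positivity) hd_lo
    have hτd : bdist Ω (eCtr k z) ≤ τ * bdist Ω (eCtr k z) :=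
      le_mul_of_one_le_left hd_pos.le hτ
    have hlt : sn * (17/32 * h) < sn * h := by nlinarith
    linarith
  have hUeq : cubeU k z = ((MeasurableEquiv.toLp 2 (Fin n → ℝ)).symm) ⁻¹'
      (Set.univ.pi fun i =>
        Ioo (((z i:ℝ)+1/2)*h - 17/16*(h/2)) (((z i:ℝ)+1/2)*h + 17/16*(h/2))) := by
    ext x
    rw [hmemU, Set.mem_preimage, Set.mem_univ_pi]
    refine forall_congr' fun i => ?_
    have hxi : ((MeasurableEquiv.toLp 2 (Fin n → ℝ)).symm) x i = x i := rfl
    rw [hxi, Set.mem_Ioo, abs_lt]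
    constructor
    · rintro ⟨h1, h2⟩; constructor <;> linarith
    · rintro ⟨h1, h2⟩; constructor <;> linarith
  have hUmeas : MeasurableSet (cubeU k z) := by
    rw [hUeq]
    exact ((MeasurableEquiv.toLp 2 (Fin n → ℝ)).symm).measurable
      (MeasurableSet.univ_pi fun i => measurableSet_Ioo)
  have hUvol : volume (cubeU k z) = ENNReal.ofReal (17/16 * h) ^ n := by
    rw [hUeq, (EuclideanSpace.volume_preserving_symm_measurableEquiv_toLp (Fin n)).measure_preimage
      (MeasurableSet.univ_pi fun i => measurableSet_Ioo).nullMeasurableSet, volume_pi_pi]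
    have hvol : ∀ i : Fin n,
        volume (Ioo (((z i:ℝ)+1/2)*h - 17/16*(h/2)) (((z i:ℝ)+1/2)*h + 17/16*(h/2)))
        = ENNReal.ofReal (17/16 * h) := fun i => by
      rw [Real.volume_Ioo]; congr 1; ring
    rw [Finset.prod_congr rfl fun i _ => hvol i, Finset.prod_const, Finset.card_univ,
      Fintype.card_fin]
  exact ⟨hUmeas, hUvol, hctrΩ, hUΩ, hUball, hd_lo, hd_hi⟩

end OffdiagHelpers

set_option maxHeartbeats 4000000 in
/-- Lemma 4.9, off-diagonal `K₀`-type estimates over a tree-covering. -/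
theorem offdiag_K0_estimates
    (n : ℕ) (Ω : Set (Eucl n)) (hΩo : IsOpen Ω) (hΩc : IsConnected Ω)
    (hΩb : Bornology.IsBounded Ω) (T : WhitneyTreeCovering n Ω)
    (α : ℝ) (hα0 : 0 < α) (hαn : α < n)
    (p q : Eucl n → ℝ) (hpm : Measurable p) (hqm : Measurable q)
    (hp1 : ∀ x ∈ Ω, 1 ≤ p x) (hq1 : ∀ x ∈ Ω, 1 ≤ q x)
    (hpb : ∃ M : ℝ, ∀ᵐ x ∂(volume.restrict Ω), p x ≤ M)
    (hqb : ∃ M : ℝ, ∀ᵐ x ∂(volume.restrict Ω), q x ≤ M)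
    (hpminus : 1 < essInfOn p Ω)
    (β : ℝ) (hβ0 : 0 < β) (hβα : β ≤ α)
    (hpq : ∀ᵐ x ∂(volume.restrict Ω), 1 / p x - 1 / q x = β / n)
    (τ : ℝ) (hτ : 1 ≤ τ) (C₀ : ℝ) (hC₀ : 0 < C₀) (hLH : BoundaryLH Ω p τ C₀) :
    (∃ C : ℝ, ∀ t : T.ι,
      (volume (T.U t)).toReal ^ (-1 + α / n)
          * luxNorm Ω q (charFun (T.U t)) * luxNorm Ω (dualExp p) (charFun (T.U t)) ≤ C) ∧
    (∃ C : ℝ, ∀ t : T.ι,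
      (volume (T.U t)).toReal ^ (-1 - β / n)
          * luxNorm Ω (dualExp q) (charFun (T.U t)) * luxNorm Ω p (charFun (T.U t)) ≤ C) := by
  classical
  have hnR : (0:ℝ) < (n:ℝ) := lt_trans hα0 hαn
  have hn : 0 < n := by exact_mod_cast hnR
  set sn := Real.sqrt n with hsn
  have hsn1 : (1:ℝ) ≤ sn := by
    have h1 : (1:ℝ) ≤ (n:ℝ) := by exact_mod_cast hn
    calc (1:ℝ) = Real.sqrt 1 := Real.sqrt_one.symm
      _ ≤ sn := Real.sqrt_le_sqrt h1
  have hsn0 : (0:ℝ) < sn := lt_of_lt_of_le one_pos hsn1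
  have hτ0 : (0:ℝ) < τ := lt_of_lt_of_le one_pos hτ
  have hΩmeas : MeasurableSet Ω := hΩo.measurableSet
  have hΩfin : volume Ω ≠ ⊤ := by
    obtain ⟨R, hR⟩ := hΩb.subset_closedBall 0
    exact ne_top_of_le_ne_top measure_closedBall_lt_top.ne (measure_mono hR)
  haveI hae : (ae (volume.restrict Ω)).NeBot := ae_neBot.mpr (by
    rw [Ne, Measure.restrict_eq_zero]
    exact hΩo.measure_ne_zero volume hΩc.nonempty)
  obtain ⟨M, hM⟩ := hpb
  have hp1' : ∀ᵐ x ∂(volume.restrict Ω), 1 ≤ p x := ae_restrict_of_forall_mem hΩmeas hp1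
  have hq1' : ∀ᵐ x ∂(volume.restrict Ω), 1 ≤ q x := ae_restrict_of_forall_mem hΩmeas hq1
  have hpm' : ∀ᵐ x ∂(volume.restrict Ω), essInfOn p Ω ≤ p x :=
    ae_essInf_le ⟨1, eventually_map.mpr hp1'⟩
  have hpgt1 : ∀ᵐ x ∂(volume.restrict Ω), 1 < p x := by
    filter_upwards [hpm'] with x hx
    linarith [hpminus]
  have hqgt1 : ∀ᵐ x ∂(volume.restrict Ω), 1 < q x := by
    filter_upwards [hpq, hq1', hp1'] with x h1 h2 h3
    have hq0 : (0:ℝ) < q x := by linarith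
    have hp0 : (0:ℝ) < p x := by linarith
    have hbn : 0 < β / (n:ℝ) := div_pos hβ0 hnR
    have h4 : 1 / q x < 1 := by
      have h5 : 1 / p x ≤ 1 := by rw [div_le_one hp0]; exact h3
      linarith
    rwa [div_lt_one hq0] at h4
  set K := C₀ * ((n:ℝ) + (n:ℝ) * Real.log (5 * sn * τ) / Real.log 2) with hK
  set c₀ := (1 / (10 * τ * sn)) ^ n with hc₀def
  have hc₀ : 0 < c₀ := pow_pos (by positivity) n
  set C := max (max 1 (volume Ω).toReal * max 1 (volume Ω).toReal)
    (max (Real.exp K) c₀⁻¹) with hC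
  suffices hmain : ∀ t : T.ι,
      ((volume (T.U t)).toReal ^ (-1 + α / n)
          * luxNorm Ω q (charFun (T.U t)) * luxNorm Ω (dualExp p) (charFun (T.U t)) ≤ C) ∧
      ((volume (T.U t)).toReal ^ (-1 - β / n)
          * luxNorm Ω (dualExp q) (charFun (T.U t)) * luxNorm Ω p (charFun (T.U t)) ≤ C) by
    exact ⟨⟨C, fun t => (hmain t).1⟩, ⟨C, fun t => (hmain t).2⟩⟩
  intro t
  have hQΩ : cubeQ (T.kk t) (T.zz t) ⊆ Ω := by
    intro x hx
    have hmem : x ∈ ⋃ s : T.ι, cubeQ (T.kk s) (T.zz s) := Set.mem_iUnion_of_mem t hx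
    rwa [T.unionQ] at hmem
  obtain ⟨hUmeas, hUvol, hctrΩ, hUΩ, hUball, hd_lo, hd_hi⟩ :=
    cube_facts hn hΩo hτ (T.kk t) (T.zz t) hQΩ (T.whitney₁ t) (T.whitney₂ t)
  set k := T.kk t with hk
  set z := T.zz t with hz
  have hh0 : (0:ℝ) < (2:ℝ)^(-k) := zpow_pos two_pos _
  set h : ℝ := (2:ℝ)^(-k) with hh
  set U := cubeU k z with hUdef
  have hU0 : volume U ≠ 0 := by
    rw [hUvol]
    apply pow_ne_zero
    simp only [Ne, ENNReal.ofReal_eq_zero, not_le]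
    positivity
  have hUfin : volume U ≠ ⊤ := ne_top_of_le_ne_top hΩfin (measure_mono hUΩ)
  set v := (volume U).toReal with hv
  have hv0 : 0 < v := ENNReal.toReal_pos hU0 hUfin
  have hveq : v = (17/16*h)^n := by
    rw [hv, hUvol, ENNReal.toReal_pow, ENNReal.toReal_ofReal (by positivity)]
  have hvh : h^n ≤ v := by
    rw [hveq]
    exact pow_le_pow_left₀ hh0.le (by linarith) n
  haveI : (ae (volume.restrict U)).NeBot := ae_neBot.mpr (by
    rw [Ne, Measure.restrict_eq_zero]; exact hU0)
  have haeU : ∀ {φ : Eucl n → Prop}, (∀ᵐ x ∂(volume.restrict Ω), φ x) →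
      (∀ᵐ x ∂(volume.restrict U), φ x) :=
    fun hφ => ae_mono (Measure.restrict_mono hUΩ le_rfl) hφ
  set fv : Eucl n → ℝ := fun x => 1 / p x with hfv
  set a := essSup fv (volume.restrict U) with ha
  set b := essInf fv (volume.restrict U) with hb
  have hfub : ∀ᵐ x ∂(volume.restrict U), fv x ≤ 1 := by
    apply haeU
    filter_upwards [hp1'] with x hx
    show 1 / p x ≤ 1
    rw [div_le_one (by linarith)]
    exact hx
  have hflb : ∀ᵐ x ∂(volume.restrict U), 0 ≤ fv x := by
    apply haeU
    filter_upwards [hp1'] with x hx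
    show (0:ℝ) ≤ 1 / p x
    positivity
  have ha1 : a ≤ 1 := essSup_le'' hflb hfub
  have hb0 : 0 ≤ b := le_essInf'' hfub hflb
  have haU : ∀ᵐ x ∂(volume.restrict U), fv x ≤ a := ae_le_essSup ⟨1, eventually_map.mpr hfub⟩
  have hbU : ∀ᵐ x ∂(volume.restrict U), b ≤ fv x := ae_essInf_le ⟨0, eventually_map.mpr hflb⟩
  have haU' : ∀ᵐ x ∂(volume.restrict Ω), x ∈ U → 1 / p x ≤ a :=
    ae_imp_of_ae_restrict hUmeas hUΩ haU
  have hbU' : ∀ᵐ x ∂(volume.restrict Ω), x ∈ U → b ≤ 1 / p x :=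
    ae_imp_of_ae_restrict hUmeas hUΩ hbU
  have hrq : ∀ᵐ x ∂(volume.restrict Ω), 0 < q x ∧
      (x ∈ U → 1 ≤ q x ∧ (max 0 (b - β/(n:ℝ))) * q x ≤ 1) := by
    filter_upwards [hq1', hpq, hbU'] with x h1 h2 h3
    have hq0 : (0:ℝ) < q x := by linarith
    refine ⟨hq0, fun hxU => ⟨h1, ?_⟩⟩
    have hle : max 0 (b - β/(n:ℝ)) ≤ 1 / q x := by
      apply max_le (by positivity)
      linarith [h3 hxU]
    calc max 0 (b - β/(n:ℝ)) * q x ≤ (1/q x) * q x :=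
          mul_le_mul_of_nonneg_right hle hq0.le
      _ = 1 := by field_simp
  have hrp : ∀ᵐ x ∂(volume.restrict Ω), 0 < p x ∧
      (x ∈ U → 1 ≤ p x ∧ (max 0 b) * p x ≤ 1) := by
    filter_upwards [hp1', hbU'] with x h1 h3
    have hp0 : (0:ℝ) < p x := by linarith
    refine ⟨hp0, fun hxU => ⟨h1, ?_⟩⟩
    have hle : max 0 b ≤ 1 / p x := max_le (by positivity) (h3 hxU)
    calc max 0 b * p x ≤ (1/p x) * p x := mul_le_mul_of_nonneg_right hle hp0.le
      _ = 1 := by field_simp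
  have hrp' : ∀ᵐ x ∂(volume.restrict Ω), 0 < dualExp p x ∧
      (x ∈ U → 1 ≤ dualExp p x ∧ (max 0 (1 - a)) * dualExp p x ≤ 1) := by
    filter_upwards [hpgt1, haU'] with x h1 h3
    have hp0 : (0:ℝ) < p x := by linarith
    have hps : (0:ℝ) < p x - 1 := by linarith
    have hd0 : 0 < dualExp p x := div_pos hp0 hps
    refine ⟨hd0, fun hxU => ⟨?_, ?_⟩⟩
    · rw [dualExp, le_div_iff₀ hps]
      linarith
    · have hinv : 1 / dualExp p x = (p x - 1) / p x := by
        rw [dualExp, one_div_div]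
      have hle : max 0 (1 - a) ≤ 1 / dualExp p x := by
        rw [hinv]
        apply max_le (by positivity)
        have hfrac : (p x - 1) / p x = 1 - 1 / p x := by field_simp
        rw [hfrac]
        linarith [h3 hxU]
      calc max 0 (1 - a) * dualExp p x ≤ (1/dualExp p x) * dualExp p x :=
            mul_le_mul_of_nonneg_right hle hd0.le
        _ = 1 := by field_simp
  have hrq' : ∀ᵐ x ∂(volume.restrict Ω), 0 < dualExp q x ∧
      (x ∈ U → 1 ≤ dualExp q x ∧ (max 0 (1 - a + β/(n:ℝ))) * dualExp q x ≤ 1) := by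
    filter_upwards [hqgt1, haU', hpq] with x h1 h3 h2
    have hq0 : (0:ℝ) < q x := by linarith
    have hqs : (0:ℝ) < q x - 1 := by linarith
    have hd0 : 0 < dualExp q x := div_pos hq0 hqs
    refine ⟨hd0, fun hxU => ⟨?_, ?_⟩⟩
    · rw [dualExp, le_div_iff₀ hqs]
      linarith
    · have hinv : 1 / dualExp q x = (q x - 1) / q x := by
        rw [dualExp, one_div_div]
      have hle : max 0 (1 - a + β/(n:ℝ)) ≤ 1 / dualExp q x := by
        rw [hinv]
        apply max_le (by positivity)
        have hfrac : (q x - 1) / q x = 1 - 1 / q x := by field_simp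
        rw [hfrac]
        linarith [h3 hxU, h2]
      calc max 0 (1 - a + β/(n:ℝ)) * dualExp q x ≤ (1/dualExp q x) * dualExp q x :=
            mul_le_mul_of_nonneg_right hle hd0.le
        _ = 1 := by field_simp
  have hdisj : v < 1 → c₀ ≤ v ∨ (a - b) * (-Real.log v) ≤ K := by
    intro hv1
    have hd0 : (0:ℝ) < bdist Ω (eCtr k z) := lt_of_lt_of_le (by positivity) hd_lo
    by_cases hcase : τ * bdist Ω (eCtr k z) ≤ 1/2
    · right
      have htd0 : (0:ℝ) < τ * bdist Ω (eCtr k z) := by positivity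
      have hLHt := hLH (eCtr k z) hctrΩ hcase
      set Bs := ballB Ω τ (eCtr k z) ∩ Ω with hBs
      have hUB : U ⊆ Bs := subset_inter hUball hUΩ
      have hBmeas : MeasurableSet Bs := MeasurableSet.inter measurableSet_ball hΩmeas
      haveI : (ae (volume.restrict Bs)).NeBot := ae_neBot.mpr (by
        rw [Ne, Measure.restrict_eq_zero]
        exact fun hc => hU0 (measure_mono_null hUB hc))
      have haeB : ∀ {φ : Eucl n → Prop}, (∀ᵐ x ∂(volume.restrict Ω), φ x) →
          (∀ᵐ x ∂(volume.restrict Bs), φ x) :=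
        fun hφ => ae_mono (Measure.restrict_mono inter_subset_right le_rfl) hφ
      have haeUB : ∀ {φ : Eucl n → Prop}, (∀ᵐ x ∂(volume.restrict Bs), φ x) →
          (∀ᵐ x ∂(volume.restrict U), φ x) :=
        fun hφ => ae_mono (Measure.restrict_mono hUB le_rfl) hφ
      have hp1B : ∀ᵐ x ∂(volume.restrict Bs), 1 ≤ p x := haeB hp1'
      have hMB : ∀ᵐ x ∂(volume.restrict Bs), p x ≤ M := haeB hM
      set P := essSupOn p Bs with hP
      set pim := essInfOn p Bs with hpim
      have hπ1 : 1 ≤ pim := le_essInf'' hMB hp1B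
      have hπ0 : (0:ℝ) < pim := by linarith
      have hπUae : ∀ᵐ x ∂(volume.restrict Bs), pim ≤ p x :=
        ae_essInf_le ⟨1, eventually_map.mpr hp1B⟩
      have hPUae : ∀ᵐ x ∂(volume.restrict Bs), p x ≤ P :=
        ae_le_essSup ⟨M, eventually_map.mpr hMB⟩
      have hπP : pim ≤ P := by
        obtain ⟨x, h1x, h2x⟩ := (hπUae.and hPUae).exists
        linarith
      have hP0 : (0:ℝ) < P := by linarith
      have haπ : a ≤ 1/pim := by
        apply essSup_le'' hflb
        filter_upwards [haeUB hπUae] with x h1x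
        show 1 / p x ≤ 1/pim
        exact one_div_le_one_div_of_le hπ0 h1x
      have hbP : 1/P ≤ b := by
        apply le_essInf'' hfub
        filter_upwards [haeUB hπUae, haeUB hPUae] with x h1x h2x
        show 1/P ≤ 1 / p x
        exact one_div_le_one_div_of_le (by linarith) h2x
      have hosc : a - b ≤ P - pim := by
        have hfrac : 1/pim - 1/P = (P - pim)/(pim*P) := by
          field_simp
        have h2 : (P - pim)/(pim*P) ≤ P - pim := by
          apply div_le_self (by linarith)
            (le_trans hπ1 (le_mul_of_one_le_right (by linarith : (0:ℝ) ≤ pim)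
              (by linarith : (1:ℝ) ≤ P)))
        linarith
      have hosc2 : a - b ≤ C₀ / (-Real.log (τ * bdist Ω (eCtr k z))) := le_trans hosc hLHt
      have hL2 : (0:ℝ) < Real.log 2 := Real.log_pos one_lt_two
      have hlog1 : Real.log 2 ≤ -Real.log (τ * bdist Ω (eCtr k z)) := by
        have hle := Real.log_le_log htd0 hcase
        rw [show (1:ℝ)/2 = 2⁻¹ by norm_num, Real.log_inv] at hle
        linarith
      have hD0 : (0:ℝ) < -Real.log (τ * bdist Ω (eCtr k z)) := lt_of_lt_of_le hL2 hlog1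
      have hε0 : (0:ℝ) ≤ C₀ / (-Real.log (τ * bdist Ω (eCtr k z))) := by positivity
      have hX0 : (0:ℝ) ≤ -Real.log v := by
        have hlv := Real.log_nonpos hv0.le hv1.le
        linarith
      have hlogv : -Real.log v ≤ (n:ℝ) * (-Real.log h) := by
        have hlog2 := Real.log_le_log (by positivity) hvh
        rw [Real.log_pow] at hlog2
        push_cast at hlog2 ⊢
        linarith
      have h5sn1 : (1:ℝ) ≤ 5 * sn * τ := by
        have h8 : (1:ℝ)*1 ≤ sn * τ := mul_le_mul hsn1 hτ zero_le_one hsn0.le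
        have h9 : (0:ℝ) ≤ sn * τ := by positivity
        calc (1:ℝ) = 1*1 := by ring
          _ ≤ sn*τ := h8
          _ ≤ 5*(sn*τ) := by linarith
          _ = 5*sn*τ := by ring
      have hlog5 : (0:ℝ) ≤ Real.log (5*sn*τ) := Real.log_nonneg h5sn1
      have hlogh : -Real.log h ≤ -Real.log (τ * bdist Ω (eCtr k z)) + Real.log (5*sn*τ) := by
        have h1 : τ * bdist Ω (eCtr k z) ≤ (5*sn*τ)*h := by
          calc τ * bdist Ω (eCtr k z) ≤ τ * (5*(sn*h)) :=
                mul_le_mul_of_nonneg_left hd_hi hτ0.le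
            _ = (5*sn*τ)*h := by ring
        have h2 := Real.log_le_log htd0 h1
        rw [Real.log_mul (by positivity) (ne_of_gt hh0)] at h2
        linarith
      have hεD : C₀ / (-Real.log (τ * bdist Ω (eCtr k z)))
          * (-Real.log (τ * bdist Ω (eCtr k z))) = C₀ :=
        div_mul_cancel₀ C₀ (ne_of_gt hD0)
      have hεbound : C₀ / (-Real.log (τ * bdist Ω (eCtr k z))) ≤ C₀ / Real.log 2 :=
        div_le_div_of_nonneg_left hC₀.le hL2 hlog1
      calc (a - b) * (-Real.log v)
          ≤ (C₀ / (-Real.log (τ * bdist Ω (eCtr k z)))) * (-Real.log v) :=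
            mul_le_mul_of_nonneg_right hosc2 hX0
        _ ≤ (C₀ / (-Real.log (τ * bdist Ω (eCtr k z)))) * ((n:ℝ) * (-Real.log h)) :=
            mul_le_mul_of_nonneg_left hlogv hε0
        _ ≤ (C₀ / (-Real.log (τ * bdist Ω (eCtr k z))))
            * ((n:ℝ) * (-Real.log (τ * bdist Ω (eCtr k z)) + Real.log (5*sn*τ))) := by
            apply mul_le_mul_of_nonneg_left _ hε0
            exact mul_le_mul_of_nonneg_left hlogh (Nat.cast_nonneg n)
        _ = (n:ℝ) * (C₀ / (-Real.log (τ * bdist Ω (eCtr k z)))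
              * (-Real.log (τ * bdist Ω (eCtr k z))))
            + (n:ℝ) * Real.log (5*sn*τ) * (C₀ / (-Real.log (τ * bdist Ω (eCtr k z)))) := by
            ring
        _ ≤ (n:ℝ) * C₀ + (n:ℝ) * Real.log (5*sn*τ) * (C₀ / Real.log 2) := by
            rw [hεD]
            have h7 : (n:ℝ) * Real.log (5*sn*τ) * (C₀ / (-Real.log (τ * bdist Ω (eCtr k z))))
                ≤ (n:ℝ) * Real.log (5*sn*τ) * (C₀ / Real.log 2) :=
              mul_le_mul_of_nonneg_left hεbound (by positivity)
            linarith
        _ = K := by rw [hK]; ring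
    · left
      push_neg at hcase
      have hhge : 1/(10*τ*sn) ≤ h := by
        have h8 : τ * bdist Ω (eCtr k z) ≤ 5*(τ*(sn*h)) := by
          calc τ * bdist Ω (eCtr k z) ≤ τ * (5*(sn*h)) :=
                mul_le_mul_of_nonneg_left hd_hi hτ0.le
            _ = 5*(τ*(sn*h)) := by ring
        rw [div_le_iff₀ (by positivity)]
        calc (1:ℝ) ≤ 10*(τ*(sn*h)) := by linarith
          _ = h * (10*τ*sn) := by ring
      calc c₀ = (1/(10*τ*sn))^n := rfl
        _ ≤ h^n := pow_le_pow_left₀ (by positivity) hhge n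
        _ ≤ v := hvh
  constructor
  · have he : -1 + α/(n:ℝ) ≤ 0 := by
      have h6 : α/(n:ℝ) < 1 := (div_lt_one hnR).mpr hαn
      linarith
    have hsum : b - a ≤ (-1 + α/(n:ℝ)) + max 0 (b - β/(n:ℝ)) + max 0 (1 - a) := by
      have h1 : b - β/(n:ℝ) ≤ max 0 (b - β/(n:ℝ)) := le_max_right _ _
      have h2 : 1 - a ≤ max 0 (1 - a) := le_max_right _ _
      have h3 : 0 ≤ (α - β)/(n:ℝ) := div_nonneg (by linarith) hnR.le
      have h4 : α/(n:ℝ) - β/(n:ℝ) = (α - β)/(n:ℝ) := by ring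
      linarith
    exact key_bound hUmeas hUΩ hΩfin hU0 ha1 hb0 he (le_max_left _ _) (le_max_left _ _)
      hsum hc₀ hrq hrp' hdisj
  · have he : -1 - β/(n:ℝ) ≤ 0 := by
      have h6 : 0 < β/(n:ℝ) := div_pos hβ0 hnR
      linarith
    have hsum : b - a ≤ (-1 - β/(n:ℝ)) + max 0 (1 - a + β/(n:ℝ)) + max 0 b := by
      have h1 : 1 - a + β/(n:ℝ) ≤ max 0 (1 - a + β/(n:ℝ)) := le_max_right _ _
      have h2 : b ≤ max 0 b := le_max_right _ _
      linarith
    exact key_bound hUmeas hUΩ hΩfin hU0 ha1 hb0 he (le_max_left _ _) (le_max_left _ _)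
      hsum hc₀ hrq' hrp hdisj
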